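/- For odd n ≥ 5, the automaton ℱ_n is synchronizing, the word (a b^{n-2})^{n-2} a of length n² - 3n + 3 resets it, and its reset threshold is exactly n² - 3n + 3. -/

import Mathlib

/-!
States are residues mod `n`; `b` adds `1` and `a` adds `2` exactly when it is read at `-1`
(a "jump" `-1 ↦ 1`), so every run moves a state by `#b + 2·#jumps`. If a word sends every state
to `p`, then the state `q₀ = p - #b + 2` must make `#jumps ≡ -1 (mod n)` jumps, since `2` is
invertible for odd `n`; hence at least `n - 1` jumps, hence at least `n - 1` letters `a`. Between
two jumps the state has to travel from `1` back to `-1`, which costs `n - 2` letters `b`, so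
`#b ≥ (n - 2)²` and the length is at least `n - 1 + (n - 2)² = n² - 3n + 3`.

Conversely, `a b^{n-2}` fixes `-1` and subtracts `2` elsewhere. Writing `q = -1 + 2j` with
`0 ≤ j < n`, after `n - 2` such blocks the state is `-1 + 2·(j - (n - 2))` with
`j - (n - 2) ≤ 1`, i.e. `-1` or `1`, and the final `a` sends both to `1`.
-/

/-- The state reached from `q` by reading the word `w`. -/
def run {Q A : Type*} (δ : Q → A → Q) (q : Q) (w : List A) : Q := w.foldl δ q

/-- The automaton `ℱ_n` on states `0,…,n-1` (paper's `1,…,n` shifted by one):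
the letter `a` (= `true`) fixes all states except `n-1 ↦ 1`;
the letter `b` (= `false`) is the cyclic shift `i ↦ i+1 (mod n)`. -/
def fAut (n : ℕ) (q : ZMod n) : Bool → ZMod n
  | true => if q.val = n - 1 then 1 else q
  | false => q + 1

open Function

section Run

variable {Q A : Type*} (δ : Q → A → Q)

@[simp] lemma run_nil (q : Q) : run δ q [] = q := rfl

@[simp] lemma run_cons (q : Q) (x : A) (xs : List A) : run δ q (x :: xs) = run δ (δ q x) xs :=
  rfl

@[simp] lemma run_append (q : Q) (u v : List A) : run δ q (u ++ v) = run δ (run δ q u) v :=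
  List.foldl_append

lemma run_flatten_replicate (u : List A) (k : ℕ) (q : Q) :
    run δ q (List.replicate k u).flatten = (fun p => run δ p u)^[k] q := by
  induction k generalizing q with
  | zero => rfl
  | succ k ih => rw [List.replicate_succ, List.flatten_cons, run_append, ih, iterate_succ_apply]

end Run

namespace ZMod

variable {n : ℕ}

lemma val_eq_sub_one_iff [NeZero n] {q : ZMod n} : q.val = n - 1 ↔ q = -1 := by
  obtain ⟨m, rfl⟩ := Nat.exists_eq_succ_of_ne_zero (NeZero.ne n)
  rw [← (val_injective _).eq_iff, val_neg_one, Nat.succ_sub_one]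

lemma dvd_of_two_mul_natCast_eq_zero (hodd : Odd n) {m : ℕ} (h : 2 * (m : ZMod n) = 0) :
    n ∣ m := by
  have h' : ((2 * m : ℕ) : ZMod n) = 0 := by push_cast; exact h
  exact (Nat.coprime_two_right.mpr hodd).dvd_of_dvd_mul_left ((natCast_eq_zero_iff _ _).mp h')

lemma exists_eq_neg_one_add_two_mul (hodd : Odd n) (q : ZMod n) :
    ∃ j < n, q = -1 + 2 * (j : ZMod n) := by
  have : NeZero n := ⟨hodd.pos.ne'⟩
  have h2 : (2 : ZMod n) * (2 : ZMod n)⁻¹ = 1 := by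
    exact_mod_cast coe_mul_inv_eq_one 2 (Nat.coprime_two_left.mpr hodd)
  refine ⟨((q + 1) * (2 : ZMod n)⁻¹).val, val_lt _, ?_⟩
  rw [natCast_zmod_val]
  linear_combination (-(q + 1)) * h2

end ZMod

variable {n : ℕ}

lemma Nat.sq_sub_three_mul_add_three (hn : 3 ≤ n) :
    n ^ 2 - 3 * n + 3 = (n - 1) * (n - 2) + 1 := by
  obtain ⟨m, rfl⟩ := Nat.exists_eq_add_of_le' hn
  have h : (m + 3) ^ 2 = 3 * (m + 3) + m * (m + 3) := by ring
  rw [h, Nat.add_sub_cancel_left, show m + 3 - 1 = m + 2 by omega, show m + 3 - 2 = m + 1 by omega]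
  ring

lemma fAut_true [NeZero n] (q : ZMod n) : fAut n q true = if q = -1 then 1 else q := by
  simp only [fAut, ZMod.val_eq_sub_one_iff]

@[simp] lemma fAut_false (q : ZMod n) : fAut n q false = q + 1 := rfl

lemma run_fAut_replicate_false (m : ℕ) (q : ZMod n) :
    run (fAut n) q (List.replicate m false) = q + m := by
  induction m generalizing q with
  | zero => simp
  | succ m ih => rw [List.replicate_succ, run_cons, fAut_false, ih]; push_cast; ring

def resetBlock (n : ℕ) : List Bool := true :: List.replicate (n - 2) false

def resetWord (n : ℕ) : List Bool := (List.replicate (n - 2) (resetBlock n)).flatten ++ [true]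

lemma length_resetWord (hn : 3 ≤ n) : (resetWord n).length = n ^ 2 - 3 * n + 3 := by
  simp only [resetWord, resetBlock, List.length_append, List.length_flatten, List.map_replicate,
    List.sum_replicate, List.length_cons, List.length_replicate, smul_eq_mul, List.length_nil,
    Nat.sq_sub_three_mul_add_three hn, show n - 2 + 1 = n - 1 by omega, Nat.mul_comm (n - 2)]

lemma run_resetBlock (hn : 2 ≤ n) (q : ZMod n) :
    run (fAut n) q (resetBlock n) = if q = -1 then -1 else q - 2 := by
  have : NeZero n := ⟨by omega⟩
  rw [resetBlock, run_cons, fAut_true, run_fAut_replicate_false, Nat.cast_sub hn,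
    ZMod.natCast_self]
  split_ifs <;> ring

lemma run_resetBlock_neg_one_add_two_mul (hodd : Odd n) (hn : 2 ≤ n) {j : ℕ} (hj : j < n) :
    run (fAut n) (-1 + 2 * (j : ZMod n)) (resetBlock n) = -1 + 2 * ((j - 1 : ℕ) : ZMod n) := by
  rw [run_resetBlock hn]
  rcases Nat.eq_zero_or_pos j with rfl | hj0
  · simp
  · have hne : -1 + 2 * (j : ZMod n) ≠ -1 := fun h => by
      have := Nat.eq_zero_of_dvd_of_lt (ZMod.dvd_of_two_mul_natCast_eq_zero hodd (by
        linear_combination h)) hj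
      omega
    rw [if_neg hne, Nat.cast_sub hj0]
    ring

lemma iterate_run_resetBlock (hodd : Odd n) (hn : 2 ≤ n) {j : ℕ} (hj : j < n) (k : ℕ) :
    (fun q => run (fAut n) q (resetBlock n))^[k] (-1 + 2 * (j : ZMod n)) =
      -1 + 2 * ((j - k : ℕ) : ZMod n) := by
  induction k generalizing j with
  | zero => simp
  | succ k ih =>
    rw [iterate_succ_apply, run_resetBlock_neg_one_add_two_mul hodd hn hj, ih (by omega),
      Nat.sub_sub, Nat.add_comm 1 k]

lemma run_resetWord (hodd : Odd n) (hn : 3 ≤ n) (q : ZMod n) :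
    run (fAut n) q (resetWord n) = 1 := by
  have : NeZero n := ⟨by omega⟩
  have : Fact (2 < n) := ⟨hn⟩
  obtain ⟨j, hj, rfl⟩ := ZMod.exists_eq_neg_one_add_two_mul hodd q
  rw [resetWord, run_append, run_flatten_replicate, iterate_run_resetBlock hodd (by omega) hj,
    run_cons, run_nil, fAut_true]
  obtain h | h : j - (n - 2) = 0 ∨ j - (n - 2) = 1 := by omega
  · simp [h]
  · have h1 : -1 + 2 * ((1 : ℕ) : ZMod n) = 1 := by push_cast; ring
    rw [h, h1, if_neg ZMod.neg_one_ne_one.symm]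

def jumpCount (n : ℕ) : ZMod n → List Bool → ℕ
  | _, [] => 0
  | q, false :: xs => jumpCount n (q + 1) xs
  | q, true :: xs => (if q = -1 then 1 else 0) + jumpCount n (fAut n q true) xs

lemma run_eq_add_count_add_jumpCount [NeZero n] (v : List Bool) (q : ZMod n) :
    run (fAut n) q v = q + v.count false + 2 * jumpCount n q v := by
  induction v generalizing q with
  | nil => simp [jumpCount]
  | cons x xs ih =>
    cases x
    · simp only [run_cons, fAut_false, ih, jumpCount, List.count_cons_self]
      push_cast; ring
    · by_cases hq : q = -1
      · simp only [hq, run_cons, fAut_true, ↓reduceIte, ih, ne_eq, Bool.true_eq_false,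
          not_false_eq_true, List.count_cons_of_ne, jumpCount, Nat.cast_add, Nat.cast_one]
        ring
      · simp [ih, jumpCount, fAut_true, hq]

lemma jumpCount_le_count_true (v : List Bool) (q : ZMod n) : jumpCount n q v ≤ v.count true := by
  induction v generalizing q with
  | nil => simp [jumpCount]
  | cons x xs ih =>
    cases x
    · simpa [jumpCount] using ih (q + 1)
    · have := ih (fAut n q true)
      simp only [jumpCount, List.count_cons_self]
      split_ifs <;> omega

lemma one_add_natCast_ne_neg_one {e : ℕ} (he : e + 2 < n) : (1 : ZMod n) + e ≠ -1 := fun h => by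
  have h' : ((e + 2 : ℕ) : ZMod n) = 0 := by push_cast; linear_combination h
  have := Nat.eq_zero_of_dvd_of_lt ((ZMod.natCast_eq_zero_iff _ _).mp h') he
  omega

/-- `d` is a lower bound, capped at `n - 2`, for the number of `b`s needed before the first jump;
after each jump the state is `1`, which is `n - 2` letters `b` away from `-1`. -/
lemma jumpCount_mul_add_le (hn : 2 ≤ n) (v : List Bool) (q : ZMod n) (d : ℕ) (hd : d ≤ n - 2)
    (hq : ∀ e < d, q + e ≠ -1) :
    jumpCount n q v * (n - 2) + d ≤ v.count false + (n - 2) := by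
  have : NeZero n := ⟨by omega⟩
  induction v generalizing q d with
  | nil => simpa [jumpCount]
  | cons x xs ih =>
    by_cases hq1 : q = -1
    · obtain rfl : d = 0 := by
        by_contra hd0
        exact hq 0 (by omega) (by simpa using hq1)
      cases x
      · have := ih (q + 1) 0 (Nat.zero_le _) (by simp)
        simp only [jumpCount, List.count_cons_self]
        omega
      · have := ih 1 (n - 2) le_rfl fun e he => one_add_natCast_ne_neg_one (by omega)
        simp only [jumpCount, hq1, ↓reduceIte, fAut_true, add_mul, one_mul, ne_eq,
          Bool.true_eq_false, not_false_eq_true, List.count_cons_of_ne]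
        omega
    · cases x
      · have := ih (q + 1) (d - 1) (by omega) fun e he => by
          have := hq (e + 1) (by omega)
          push_cast at this ⊢
          rwa [add_assoc, add_comm 1]
        simp only [jumpCount, List.count_cons_self]
        omega
      · simpa [jumpCount, fAut_true, hq1] using ih q d hd hq

lemma exists_le_jumpCount (hodd : Odd n) {v : List Bool} {p : ZMod n}
    (hp : ∀ q, run (fAut n) q v = p) : ∃ q, n - 1 ≤ jumpCount n q v := by
  have : NeZero n := ⟨hodd.pos.ne'⟩
  set q₀ := p - v.count false + 2
  have h := hp q₀
  rw [run_eq_add_count_add_jumpCount] at h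
  have hdvd : n ∣ jumpCount n q₀ v + 1 := ZMod.dvd_of_two_mul_natCast_eq_zero hodd (by
    push_cast; linear_combination h)
  exact ⟨q₀, by have := Nat.le_of_dvd (by omega) hdvd; omega⟩

lemma le_length_of_run_eq (hodd : Odd n) (hn : 3 ≤ n) {v : List Bool} {p : ZMod n}
    (hp : ∀ q, run (fAut n) q v = p) : n ^ 2 - 3 * n + 3 ≤ v.length := by
  obtain ⟨q, hJ⟩ := exists_le_jumpCount hodd hp
  have ha := jumpCount_le_count_true v q
  have hb := jumpCount_mul_add_le (by omega) v q 0 (by omega) (by simp)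
  have hJb := Nat.mul_le_mul_right (n - 2) hJ
  rw [← List.count_true_add_count_false, Nat.sq_sub_three_mul_add_three hn]
  omega

/-- For odd `n ≥ 5`, the automaton `ℱ_n` is synchronizing, the word `(a b^{n-2})^{n-2} a`
of length `n² - 3n + 3` resets it, and its reset threshold is exactly `n² - 3n + 3`. -/
theorem stmt_16 (n : ℕ) (hodd : Odd n) (hn : 5 ≤ n) :
    let w : List Bool :=
      (List.replicate (n - 2) (true :: List.replicate (n - 2) false)).flatten ++ [true]
    w.length = n ^ 2 - 3 * n + 3 ∧
    (∃ p : ZMod n, ∀ q, run (fAut n) q w = p) ∧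
    (∀ v : List Bool, (∃ p : ZMod n, ∀ q, run (fAut n) q v = p) →
      n ^ 2 - 3 * n + 3 ≤ v.length) :=
  ⟨length_resetWord (by omega), ⟨1, run_resetWord hodd (by omega)⟩,
    fun _ ⟨_, hp⟩ => le_length_of_run_eq hodd (by omega) hp⟩
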